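/- Let ℓ ≥ 1, let D ∈ ℝ^{ℓ×ℓ} be the diagonal matrix whose first ℓ−1 diagonal entries are 1 and whose last diagonal entry is 1/2, let Ω ∈ ℝ^{ℓ×ℓ} be a skew-symmetric matrix (Ωᵀ = −Ω), and set R := D + Ω. If the 2×2 block matrix [[I_ℓ, Rᵀ],[R, I_ℓ]] is positive semidefinite, then Ω = 0. -/

import Mathlib

/-!
Up to reindexing, the block matrix is `fromBlocks 1 Rᵀ R 1`, whose Schur complement is
`1 - R Rᵀ`; so every row of `R` has squared norm at most `1`. A skew-symmetric `Ω` has zero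
diagonal, so every row `i` except the last has `R i i = 1`, which forces its off-diagonal entries
`Ω i j` to vanish. The entries of the last row vanish by skew-symmetry.
-/

open Matrix

noncomputable section

/-- The diagonal matrix `D = diag(1, …, 1, 1/2)`. -/
def Ddiag (l : ℕ) : Matrix (Fin l) (Fin l) ℝ :=
  Matrix.of fun i j => if i = j then (if (i : ℕ) = l - 1 then 1/2 else 1) else 0

/-- The `2ℓ×2ℓ` block matrix `[[I_ℓ, Rᵀ], [R, I_ℓ]]`. -/
def blockIRtRI (l : ℕ) (R : Matrix (Fin l) (Fin l) ℝ) :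
    Matrix (Fin (2*l)) (Fin (2*l)) ℝ :=
  Matrix.of fun i j =>
    if h1 : (i : ℕ) < l then
      if h2 : (j : ℕ) < l then (if i = j then 1 else 0)
      else Rᵀ ⟨(i : ℕ), h1⟩ ⟨(j : ℕ) - l, by omega⟩
    else
      if h2 : (j : ℕ) < l then R ⟨(i : ℕ) - l, by omega⟩ ⟨(j : ℕ), h2⟩
      else (if (i : ℕ) = (j : ℕ) then 1 else 0)

namespace Matrix

variable {m n R : Type*} [Fintype m] [Fintype n] [DecidableEq m] [DecidableEq n]
  [Field R] [PartialOrder R] [StarRing R] [StarOrderedRing R]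

theorem posSemidef_fromBlocks_one_conjTranspose_iff (A : Matrix m n R) :
    (fromBlocks 1 Aᴴ A 1).PosSemidef ↔ (1 - A * Aᴴ).PosSemidef := by
  have : Invertible (1 : Matrix n n R) := invertibleOne
  have := PosDef.fromBlocks₁₁ Aᴴ (1 : Matrix m m R) (PosDef.one (n := n))
  simpa only [conjTranspose_conjTranspose, inv_one, Matrix.mul_one] using this

end Matrix

theorem Matrix.PosSemidef.sum_sq_row_le_one {m n : Type*} [Fintype m] [Fintype n] [DecidableEq m]
    {A : Matrix m n ℝ} (hA : (1 - A * Aᵀ).PosSemidef) (i : m) : ∑ k, A i k ^ 2 ≤ 1 := by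
  have := hA.diag_nonneg (i := i)
  simp only [sub_apply, one_apply_eq, mul_apply, transpose_apply] at this
  simpa [sq] using this

theorem Fintype.eq_zero_of_sum_sq_le_sq {ι 𝕜 : Type*} [Fintype ι] [DecidableEq ι] [Field 𝕜]
    [LinearOrder 𝕜] [IsStrictOrderedRing 𝕜] {f : ι → 𝕜} {i j : ι}
    (h : ∑ k, f k ^ 2 ≤ f i ^ 2) (hji : j ≠ i) : f j = 0 := by
  rw [← Finset.add_sum_erase _ _ (Finset.mem_univ i)] at h
  have hsum : ∑ k ∈ Finset.univ.erase i, f k ^ 2 = 0 :=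
    le_antisymm (by linarith) (Finset.sum_nonneg fun _ _ => sq_nonneg _)
  rw [Finset.sum_eq_zero_iff_of_nonneg fun _ _ => sq_nonneg _] at hsum
  exact pow_eq_zero_iff two_ne_zero |>.mp (hsum j (Finset.mem_erase.2 ⟨hji, Finset.mem_univ j⟩))

theorem Matrix.apply_self_eq_zero_of_transpose_eq_neg {n 𝕜 : Type*} [Field 𝕜] [LinearOrder 𝕜]
    [IsStrictOrderedRing 𝕜] {Ω : Matrix n n 𝕜}
    (hΩ : Ωᵀ = -Ω) (i : n) : Ω i i = 0 := by
  have := congrFun (congrFun hΩ i) i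
  simp only [transpose_apply, Matrix.neg_apply] at this
  linarith

theorem Ddiag_apply_of_ne {l : ℕ} {i j : Fin l} (h : i ≠ j) : Ddiag l i j = 0 := by
  simp [Ddiag, h]

theorem Ddiag_apply_self_of_ne {l : ℕ} {i : Fin l} (h : (i : ℕ) ≠ l - 1) : Ddiag l i i = 1 := by
  simp [Ddiag, h]

theorem blockIRtRI_submatrix (l : ℕ) (R : Matrix (Fin l) (Fin l) ℝ) :
    (blockIRtRI l R).submatrix (finSumFinEquiv.trans (finCongr (two_mul l).symm))
      (finSumFinEquiv.trans (finCongr (two_mul l).symm)) = fromBlocks 1 Rᵀ R 1 := by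
  ext (i | i) (j | j) <;> simp [blockIRtRI, one_apply, Fin.ext_iff]

theorem posSemidef_blockIRtRI_iff (l : ℕ) (R : Matrix (Fin l) (Fin l) ℝ) :
    (blockIRtRI l R).PosSemidef ↔ (1 - R * Rᵀ).PosSemidef := by
  rw [← posSemidef_submatrix_equiv (finSumFinEquiv.trans (finCongr (two_mul l).symm)),
    blockIRtRI_submatrix, ← conjTranspose_eq_transpose_of_trivial,
    posSemidef_fromBlocks_one_conjTranspose_iff]

theorem skew_part_vanishes (l : ℕ)
    (Ω : Matrix (Fin l) (Fin l) ℝ) (hΩ : Ωᵀ = -Ω)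
    (h : (blockIRtRI l (Ddiag l + Ω)).PosSemidef) :
    Ω = 0 := by
  have hdiag := apply_self_eq_zero_of_transpose_eq_neg hΩ
  have hrow := ((posSemidef_blockIRtRI_iff l _).1 h).sum_sq_row_le_one
  have hoff : ∀ i j : Fin l, j ≠ i → (i : ℕ) ≠ l - 1 → Ω i j = 0 := by
    intro i j hji hi
    have hRi : ∑ k, (Ddiag l + Ω) i k ^ 2 ≤ (Ddiag l + Ω) i i ^ 2 := by
      simpa [Ddiag_apply_self_of_ne hi, hdiag] using hrow i
    simpa [Ddiag_apply_of_ne hji.symm] using Fintype.eq_zero_of_sum_sq_le_sq hRi hji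
  ext i j
  rcases eq_or_ne j i with rfl | hji
  · exact hdiag j
  by_cases hi : (i : ℕ) = l - 1
  · have hj : (j : ℕ) ≠ l - 1 := fun hj => hji (Fin.ext (hj.trans hi.symm))
    have hskew := congrFun (congrFun hΩ j) i
    simp only [transpose_apply, Matrix.neg_apply] at hskew
    simp [hskew, hoff j i hji.symm hj]
  · exact hoff i j hji hi
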